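/- arXiv:1802.08169 — 3 statements merged into one kernel-verified Lean document; each statement's English description precedes it below -/
import Mathlib

section
/- Let U ⊆ ℂ be open, let (f, g) be Weierstrass data on U, and let X : U → ℝ³ be a differentiable map whose partial derivatives satisfy ∂X/∂x (z) = Re Φ(z) and ∂X/∂y (z) = −Im Φ(z) for all z ∈ U, where Φ = (f(1 − g²)/2, i f(1 + g²)/2, f g) : U → ℂ³ (real and imaginary parts taken componentwise). Then X is a conformal immersion with conformal factor λ: for every z ∈ U one has ‖∂X/∂x (z)‖ = ‖∂X/∂y (z)‖ = λ(z) and ⟨∂X/∂x (z), ∂X/∂y (z)⟩ = 0. -/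
/-!
Writing `Φ = a - i b` with `a = ∂X/∂x`, `b = ∂X/∂y` real, the identity
`∑ Φᵢ² = (‖a‖² - ‖b‖²) - 2i⟪a, b⟫` shows that `X` is conformal exactly when `Φ` is isotropic,
and `∑ |Φᵢ|² = ‖a‖² + ‖b‖²` then gives the common length. For the Weierstrass
`Φ = (f(1 - g²)/2, i f(1 + g²)/2, f g)` isotropy is a polynomial identity, and the
parallelogram law `|1 - g²|² + |1 + g²|² = 2(1 + |g|⁴)` gives `∑ |Φᵢ|² = 2λ²`.
-/

open Complex

section IsotropicVector

variable {ι : Type*} [Fintype ι] (w : ι → ℂ)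

theorem re_sum_sq_eq_norm_sq_re_sub_norm_sq_im :
    (∑ i, w i ^ 2).re =
      ‖WithLp.toLp 2 fun i => (w i).re‖ ^ 2 - ‖WithLp.toLp 2 fun i => (w i).im‖ ^ 2 := by
  simp only [EuclideanSpace.norm_sq_eq, re_sum, Real.norm_eq_abs, sq_abs,
    ← Finset.sum_sub_distrib]
  exact Finset.sum_congr rfl fun i _ => by simp only [sq, mul_re]

theorem im_sum_sq_eq_two_mul_inner_re_im :
    (∑ i, w i ^ 2).im =
      2 * inner ℝ (WithLp.toLp 2 fun i => (w i).re) (WithLp.toLp 2 fun i => (w i).im) := by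
  simp only [PiLp.inner_apply, im_sum, Finset.mul_sum, RCLike.inner_apply, conj_trivial]
  exact Finset.sum_congr rfl fun i _ => by simp only [sq, mul_im]; ring

theorem sum_norm_sq_eq_norm_sq_re_add_norm_sq_im :
    ∑ i, ‖w i‖ ^ 2 =
      ‖WithLp.toLp 2 fun i => (w i).re‖ ^ 2 + ‖WithLp.toLp 2 fun i => (w i).im‖ ^ 2 := by
  simp only [EuclideanSpace.norm_sq_eq, Real.norm_eq_abs, sq_abs, ← Finset.sum_add_distrib]
  exact Finset.sum_congr rfl fun i _ => by rw [Complex.sq_norm, normSq_apply]; ring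

variable {w}

theorem norm_sq_re_of_sum_sq_eq_zero (hw : ∑ i, w i ^ 2 = 0) :
    ‖WithLp.toLp 2 fun i => (w i).re‖ ^ 2 = (∑ i, ‖w i‖ ^ 2) / 2 := by
  have h := re_sum_sq_eq_norm_sq_re_sub_norm_sq_im w
  rw [hw, zero_re] at h
  rw [sum_norm_sq_eq_norm_sq_re_add_norm_sq_im]
  linarith

theorem norm_sq_im_of_sum_sq_eq_zero (hw : ∑ i, w i ^ 2 = 0) :
    ‖WithLp.toLp 2 fun i => (w i).im‖ ^ 2 = (∑ i, ‖w i‖ ^ 2) / 2 := by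
  have h := re_sum_sq_eq_norm_sq_re_sub_norm_sq_im w
  rw [hw, zero_re] at h
  rw [sum_norm_sq_eq_norm_sq_re_add_norm_sq_im]
  linarith

theorem inner_re_im_of_sum_sq_eq_zero (hw : ∑ i, w i ^ 2 = 0) :
    inner ℝ (WithLp.toLp 2 fun i => (w i).re) (WithLp.toLp 2 fun i => (w i).im) = 0 := by
  have h := im_sum_sq_eq_two_mul_inner_re_im w
  rw [hw, zero_im] at h
  linarith

end IsotropicVector

section WeierstrassData

variable (a b : ℂ)

noncomputable def weierstrassVector : Fin 3 → ℂ :=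
  ![a * (1 - b ^ 2) / 2, I * a * (1 + b ^ 2) / 2, a * b]

theorem sum_sq_weierstrassVector : ∑ i, weierstrassVector a b i ^ 2 = 0 := by
  simp only [weierstrassVector, Fin.sum_univ_three, Matrix.cons_val_zero, Matrix.cons_val_one,
    Matrix.cons_val_two, Matrix.head_cons, Matrix.tail_cons]
  linear_combination (a * (1 + b ^ 2) / 2) ^ 2 * I_sq

theorem sum_norm_sq_weierstrassVector :
    ∑ i, ‖weierstrassVector a b i‖ ^ 2 = 2 * (‖a‖ * (1 + ‖b‖ ^ 2) / 2) ^ 2 := by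
  have parallelogram := parallelogram_law_with_norm ℝ (1 : ℂ) (b ^ 2)
  simp only [weierstrassVector, Fin.sum_univ_three, Matrix.cons_val_zero, Matrix.cons_val_one,
    Matrix.cons_val_two, Matrix.head_cons, Matrix.tail_cons, norm_div, norm_mul, norm_I,
    norm_pow, norm_one, Complex.norm_ofNat] at parallelogram ⊢
  linear_combination ‖a‖ ^ 2 / 4 * parallelogram

end WeierstrassData

theorem weierstrass_representation_conformal_general
    (U : Set ℂ)
    (f g : ℂ → ℂ)
    (Φ : ℂ → Fin 3 → ℂ)
    (hΦ : ∀ z, Φ z = ![f z * (1 - g z ^ 2) / 2,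
                        Complex.I * f z * (1 + g z ^ 2) / 2,
                        f z * g z])
    (X : ℂ → EuclideanSpace ℝ (Fin 3))
    (hXx : ∀ z ∈ U, fderiv ℝ X z 1 =
      (WithLp.equiv 2 (Fin 3 → ℝ)).symm (fun i => (Φ z i).re))
    (hXy : ∀ z ∈ U, fderiv ℝ X z Complex.I =
      (WithLp.equiv 2 (Fin 3 → ℝ)).symm (fun i => -(Φ z i).im))
    (lam : ℂ → ℝ)
    (hlam : ∀ z, lam z = ‖f z‖ * (1 + ‖g z‖ ^ 2) / 2) :
    ∀ z ∈ U,
      ‖fderiv ℝ X z 1‖ = lam z ∧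
      ‖fderiv ℝ X z Complex.I‖ = lam z ∧
      inner ℝ (fderiv ℝ X z 1) (fderiv ℝ X z Complex.I) = (0 : ℝ) := by
  intro z hz
  have hΦz : Φ z = weierstrassVector (f z) (g z) := hΦ z
  have isotropic := sum_sq_weierstrassVector (f z) (g z)
  have hlength : (∑ i, ‖weierstrassVector (f z) (g z) i‖ ^ 2) / 2 = lam z ^ 2 := by
    rw [sum_norm_sq_weierstrassVector, hlam]; ring
  have hlam_nonneg : 0 ≤ lam z := by rw [hlam]; positivity
  have hneg : (WithLp.toLp 2 fun i => -(Φ z i).im) = -WithLp.toLp 2 fun i => (Φ z i).im :=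
    WithLp.toLp_neg 2 _
  rw [hXx z hz, hXy z hz, WithLp.equiv_symm_apply, hneg, hΦz, norm_neg,
    inner_neg_right, neg_eq_zero, ← sq_eq_sq₀ (norm_nonneg _) hlam_nonneg,
    ← sq_eq_sq₀ (norm_nonneg _) hlam_nonneg, ← hlength]
  exact ⟨norm_sq_re_of_sum_sq_eq_zero isotropic, norm_sq_im_of_sum_sq_eq_zero isotropic,
    inner_re_im_of_sum_sq_eq_zero isotropic⟩

/-- Weierstrass data induce a conformal immersion.
Let `U ⊆ ℂ` be open, `(f, g)` Weierstrass data on `U` (holomorphic, `f ≠ 0`,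
`g' ≠ 0` on `U`), and let `X : U → ℝ³` have partial derivatives
`∂X/∂x = Re Φ` and `∂X/∂y = −Im Φ` where
`Φ = (f(1 − g²)/2, i f(1 + g²)/2, f g)`.  Then for every `z ∈ U`,
`‖∂X/∂x (z)‖ = ‖∂X/∂y (z)‖ = λ(z) = |f(z)|(1 + |g(z)|²)/2` and
`⟨∂X/∂x (z), ∂X/∂y (z)⟩ = 0`. -/
theorem weierstrass_representation_conformal
    (U : Set ℂ) (hU : IsOpen U)
    (f g : ℂ → ℂ)
    (hf : DifferentiableOn ℂ f U) (hg : DifferentiableOn ℂ g U)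
    (hf0 : ∀ z ∈ U, f z ≠ 0) (hg' : ∀ z ∈ U, deriv g z ≠ 0)
    (Φ : ℂ → Fin 3 → ℂ)
    (hΦ : ∀ z, Φ z = ![f z * (1 - g z ^ 2) / 2,
                        Complex.I * f z * (1 + g z ^ 2) / 2,
                        f z * g z])
    (X : ℂ → EuclideanSpace ℝ (Fin 3))
    (hXdiff : ∀ z ∈ U, DifferentiableAt ℝ X z)
    (hXx : ∀ z ∈ U, fderiv ℝ X z 1 =
      (WithLp.equiv 2 (Fin 3 → ℝ)).symm (fun i => (Φ z i).re))
    (hXy : ∀ z ∈ U, fderiv ℝ X z Complex.I =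
      (WithLp.equiv 2 (Fin 3 → ℝ)).symm (fun i => -(Φ z i).im))
    (lam : ℂ → ℝ)
    (hlam : ∀ z, lam z = ‖f z‖ * (1 + ‖g z‖ ^ 2) / 2) :
    ∀ z ∈ U,
      ‖fderiv ℝ X z 1‖ = lam z ∧
      ‖fderiv ℝ X z Complex.I‖ = lam z ∧
      inner ℝ (fderiv ℝ X z 1) (fderiv ℝ X z Complex.I) = (0 : ℝ) :=
  weierstrass_representation_conformal_general U f g Φ hΦ X hXx hXy lam hlam
end

section
/- Let U ⊆ ℂ be open, let (f, g) be Weierstrass data on U, and let X : U → ℝ³ be a differentiable map whose partial derivatives satisfy ∂X/∂x (z) = Re Φ(z) and ∂X/∂y (z) = −Im Φ(z) for all z ∈ U, where Φ = (f(1 − g²)/2, i f(1 + g²)/2, f g). Then the Gauss map N(z) = (2 Re g(z), 2 Im g(z), |g(z)|² − 1)/(1 + |g(z)|²) is a unit normal field along X: for every z ∈ U, ‖N(z)‖ = 1 and ⟨N(z), ∂X/∂x (z)⟩ = ⟨N(z), ∂X/∂y (z)⟩ = 0. -/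
/-!
With `w = g z`, the vector `v = (2 Re w, 2 Im w, |w|² - 1)` has norm `1 + |w|²`, and the complex
pairing `∑ vᵢ Φᵢ` equals `f (w - w² w̄ + |w|² w - w) = 0`, because `Re w ± i Im w` is `w` or `w̄`.
The real and the imaginary part of this pairing are `⟨v, ∂X/∂x⟩` and `-⟨v, ∂X/∂y⟩`.
-/

open Complex ComplexConjugate

lemma inner_symm_equiv_re {n : ℕ} (v : Fin n → ℝ) (Φ : Fin n → ℂ) :
    inner ℝ ((WithLp.equiv 2 (Fin n → ℝ)).symm v)
      ((WithLp.equiv 2 (Fin n → ℝ)).symm fun i => (Φ i).re) = (∑ i, (v i : ℂ) * Φ i).re := by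
  simp [PiLp.inner_apply, Complex.re_sum, mul_comm]

lemma inner_symm_equiv_neg_im {n : ℕ} (v : Fin n → ℝ) (Φ : Fin n → ℂ) :
    inner ℝ ((WithLp.equiv 2 (Fin n → ℝ)).symm v)
      ((WithLp.equiv 2 (Fin n → ℝ)).symm fun i => -(Φ i).im) = -(∑ i, (v i : ℂ) * Φ i).im := by
  simp [PiLp.inner_apply, Complex.im_sum, mul_comm]

/-- `1 + |w|²` times the inverse stereographic projection of `w`. -/
noncomputable def stereoVec (w : ℂ) : Fin 3 → ℝ := ![2 * w.re, 2 * w.im, ‖w‖ ^ 2 - 1]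

lemma norm_stereoVec (w : ℂ) :
    ‖(WithLp.equiv 2 (Fin 3 → ℝ)).symm (stereoVec w)‖ = 1 + ‖w‖ ^ 2 := by
  have hsq : ‖(WithLp.equiv 2 (Fin 3 → ℝ)).symm (stereoVec w)‖ ^ 2 = (1 + ‖w‖ ^ 2) ^ 2 := by
    rw [EuclideanSpace.norm_sq_eq]
    simp [stereoVec, Fin.sum_univ_three, Complex.sq_norm, Complex.normSq_apply]
    ring
  exact (pow_left_inj₀ (norm_nonneg _) (by positivity) two_ne_zero).mp hsq

lemma sum_stereoVec_mul_weierstrass (f w : ℂ) :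
    ∑ i, (stereoVec w i : ℂ) * ![f * (1 - w ^ 2) / 2, I * f * (1 + w ^ 2) / 2, f * w] i = 0 := by
  have hre_im : (w.re : ℂ) + I * w.im = w := by rw [mul_comm]; exact re_add_im w
  have hconj : (w.re : ℂ) - I * w.im = conj w := by
    apply Complex.ext <;> simp
  have hnorm : ((‖w‖ ^ 2 : ℝ) : ℂ) = w * conj w := by
    rw [mul_conj, Complex.sq_norm]
  simp only [stereoVec, Fin.sum_univ_three, Matrix.cons_val_zero, Matrix.cons_val_one,
    Matrix.cons_val_two, Matrix.head_cons, Matrix.tail_cons]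
  push_cast at hnorm ⊢
  linear_combination f * hre_im - f * w ^ 2 * hconj + f * w * hnorm

theorem weierstrass_gauss_map_unit_normal_general
    (U : Set ℂ)
    (f g : ℂ → ℂ)
    (Φ : ℂ → Fin 3 → ℂ)
    (hΦ : ∀ z, Φ z = ![f z * (1 - g z ^ 2) / 2,
                        Complex.I * f z * (1 + g z ^ 2) / 2,
                        f z * g z])
    (X : ℂ → EuclideanSpace ℝ (Fin 3))
    (hXx : ∀ z ∈ U, fderiv ℝ X z 1 =
      (WithLp.equiv 2 (Fin 3 → ℝ)).symm (fun i => (Φ z i).re))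
    (hXy : ∀ z ∈ U, fderiv ℝ X z Complex.I =
      (WithLp.equiv 2 (Fin 3 → ℝ)).symm (fun i => -(Φ z i).im))
    (N : ℂ → EuclideanSpace ℝ (Fin 3))
    (hN : ∀ z, N z = (1 + ‖g z‖ ^ 2)⁻¹ •
      (WithLp.equiv 2 (Fin 3 → ℝ)).symm
        ![2 * (g z).re, 2 * (g z).im, ‖g z‖ ^ 2 - 1]) :
    ∀ z ∈ U,
      ‖N z‖ = 1 ∧
      inner ℝ (N z) (fderiv ℝ X z 1) = (0 : ℝ) ∧
      inner ℝ (N z) (fderiv ℝ X z Complex.I) = (0 : ℝ) := by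
  intro z hz
  have hNz : N z = (1 + ‖g z‖ ^ 2)⁻¹ • (WithLp.equiv 2 (Fin 3 → ℝ)).symm (stereoVec (g z)) :=
    hN z
  have hpos : 0 < 1 + ‖g z‖ ^ 2 := by positivity
  have hpairing := sum_stereoVec_mul_weierstrass (f z) (g z)
  rw [← hΦ] at hpairing
  refine ⟨?_, ?_, ?_⟩
  · rw [hNz, norm_smul, norm_stereoVec, Real.norm_of_nonneg (inv_nonneg.2 hpos.le),
      inv_mul_cancel₀ hpos.ne']
  · rw [hNz, hXx z hz, real_inner_smul_left, inner_symm_equiv_re, hpairing, zero_re, mul_zero]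
  · rw [hNz, hXy z hz, real_inner_smul_left, inner_symm_equiv_neg_im, hpairing, zero_im,
      neg_zero, mul_zero]

/-- The Gauss map of the Weierstrass representation
`N(z) = (2 Re g, 2 Im g, |g|² − 1)/(1 + |g|²)` is a unit normal field along `X`:
for every `z ∈ U`, `‖N(z)‖ = 1` and `N(z)` is orthogonal to both partial
derivatives `∂X/∂x (z)` and `∂X/∂y (z)`. -/
theorem weierstrass_gauss_map_unit_normal
    (U : Set ℂ) (hU : IsOpen U)
    (f g : ℂ → ℂ)
    (hf : DifferentiableOn ℂ f U) (hg : DifferentiableOn ℂ g U)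
    (hf0 : ∀ z ∈ U, f z ≠ 0) (hg' : ∀ z ∈ U, deriv g z ≠ 0)
    (Φ : ℂ → Fin 3 → ℂ)
    (hΦ : ∀ z, Φ z = ![f z * (1 - g z ^ 2) / 2,
                        Complex.I * f z * (1 + g z ^ 2) / 2,
                        f z * g z])
    (X : ℂ → EuclideanSpace ℝ (Fin 3))
    (hXdiff : ∀ z ∈ U, DifferentiableAt ℝ X z)
    (hXx : ∀ z ∈ U, fderiv ℝ X z 1 =
      (WithLp.equiv 2 (Fin 3 → ℝ)).symm (fun i => (Φ z i).re))
    (hXy : ∀ z ∈ U, fderiv ℝ X z Complex.I =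
      (WithLp.equiv 2 (Fin 3 → ℝ)).symm (fun i => -(Φ z i).im))
    (N : ℂ → EuclideanSpace ℝ (Fin 3))
    (hN : ∀ z, N z = (1 + ‖g z‖ ^ 2)⁻¹ •
      (WithLp.equiv 2 (Fin 3 → ℝ)).symm
        ![2 * (g z).re, 2 * (g z).im, ‖g z‖ ^ 2 - 1]) :
    ∀ z ∈ U,
      ‖N z‖ = 1 ∧
      inner ℝ (N z) (fderiv ℝ X z 1) = (0 : ℝ) ∧
      inner ℝ (N z) (fderiv ℝ X z Complex.I) = (0 : ℝ) :=
  weierstrass_gauss_map_unit_normal_general U f g Φ hΦ X hXx hXy N hN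
end

section
/- Let U ⊆ ℂ be open and let (f, g) be Weierstrass data on U. Then the Gauss curvature of the induced metric is computed in the isothermal coordinate by Δ(ln λ)(z) = −K(z) λ(z)² for every z ∈ U, where Δ is the flat Laplacian, λ(z) = |f(z)|(1 + |g(z)|²)/2, and K(z) = −(4|g'(z)| / (|f(z)|(1 + |g(z)|²)²))². -/
/-!
Near a point of `U` we have `log λ = log ‖f‖ + log (1 + ‖g‖²) - log 2`. The first summand is
harmonic because `f` is holomorphic without zeros. For the second, the chain rule
`Δ (φ ∘ u) = φ'' (u) |∇u|² + φ' (u) Δu` with `φ = log`, `u = 1 + ‖g‖²`, together with the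
Cauchy–Riemann consequences `Δ ‖g‖² = 4 ‖g'‖²` and `|∇ ‖g‖²|² = 4 ‖g‖² ‖g'‖²`, gives
`Δ log (1 + ‖g‖²) = 4 ‖g'‖² / (1 + ‖g‖²)²`, which is `-K λ²`.
-/

/-- The flat Laplacian `Δ = ∂²/∂x² + ∂²/∂y²` on `ℂ ≃ ℝ²`, where the `x`-direction
is `1 : ℂ` and the `y`-direction is `I : ℂ`. -/
noncomputable def flatLaplacian (F : ℂ → ℝ) (z : ℂ) : ℝ :=
  fderiv ℝ (fun w => fderiv ℝ F w 1) z 1 +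
    fderiv ℝ (fun w => fderiv ℝ F w Complex.I) z Complex.I

open Complex ComplexConjugate Filter Topology Laplacian InnerProductSpace

section SecondDerivative

variable {𝕜 : Type*} [NontriviallyNormedField 𝕜]
  {E : Type*} [NormedAddCommGroup E] [NormedSpace 𝕜 E]

lemma fderiv_fderiv_apply_eq_iteratedFDeriv {G : Type*} [NormedAddCommGroup G] [NormedSpace 𝕜 G]
    {F : E → G} {z : E} (hF : DifferentiableAt 𝕜 (fderiv 𝕜 F) z) (e : E) :
    fderiv 𝕜 (fun w => fderiv 𝕜 F w e) z e = iteratedFDeriv 𝕜 2 F z ![e, e] := by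
  rw [iteratedFDeriv_two_apply, fderiv_clm_apply hF (differentiableAt_const e)]
  simp

lemma fderiv_fderiv_apply_comp {φ : 𝕜 → 𝕜} {u : E → 𝕜} {z : E}
    (hφ : ContDiffAt 𝕜 2 φ (u z)) (hu : ContDiffAt 𝕜 2 u z) (e : E) :
    fderiv 𝕜 (fun w => fderiv 𝕜 (fun w => φ (u w)) w e) z e =
      deriv (deriv φ) (u z) * fderiv 𝕜 u z e ^ 2 +
        deriv φ (u z) * fderiv 𝕜 (fun w => fderiv 𝕜 u w e) z e := by
  have hfirst : (fun w => fderiv 𝕜 (fun w => φ (u w)) w e) =ᶠ[𝓝 z]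
      fun w => deriv φ (u w) * fderiv 𝕜 u w e := by
    filter_upwards [hu.continuousAt.eventually (hφ.eventually (by simp)),
      hu.eventually (by simp)] with w hφw huw
    rw [fderiv_fun_comp w (hφw.differentiableAt two_ne_zero) (huw.differentiableAt two_ne_zero)]
    simp [mul_comm]
  have hdφ : DifferentiableAt 𝕜 (deriv φ) (u z) :=
    (hφ.derivWithin (m := 1) le_rfl).differentiableAt one_ne_zero
  have hdu : DifferentiableAt 𝕜 (fun w => fderiv 𝕜 u w e) z :=
    ((hu.fderiv_right (m := 1) le_rfl).differentiableAt one_ne_zero).clm_apply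
      (differentiableAt_const e)
  have hprod : HasFDerivAt (fun w => deriv φ (u w) * fderiv 𝕜 u w e) _ z :=
    (hdφ.hasDerivAt.comp_hasFDerivAt z (hu.differentiableAt two_ne_zero).hasFDerivAt).mul
      hdu.hasFDerivAt
  rw [hfirst.fderiv_eq, hprod.fderiv]
  simp only [Function.comp_apply, _root_.add_apply, _root_.smul_apply, smul_eq_mul]
  ring

end SecondDerivative

lemma flatLaplacian_eq_laplacian {F : ℂ → ℝ} {z : ℂ} (hF : ContDiffAt ℝ 2 F z) :
    flatLaplacian F z = Δ F z := by
  have hF' : DifferentiableAt ℝ (fderiv ℝ F) z :=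
    (hF.fderiv_right (m := 1) le_rfl).differentiableAt one_ne_zero
  rw [flatLaplacian, laplacian_eq_iteratedFDeriv_complexPlane,
    fderiv_fderiv_apply_eq_iteratedFDeriv hF', fderiv_fderiv_apply_eq_iteratedFDeriv hF']

lemma ContDiffAt.laplacian_comp {φ : ℝ → ℝ} {u : ℂ → ℝ} {z : ℂ}
    (hφ : ContDiffAt ℝ 2 φ (u z)) (hu : ContDiffAt ℝ 2 u z) :
    Δ (fun w => φ (u w)) z =
      deriv (deriv φ) (u z) * (fderiv ℝ u z 1 ^ 2 + fderiv ℝ u z I ^ 2) +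
        deriv φ (u z) * Δ u z := by
  have hφu : ContDiffAt ℝ 2 (fun w => φ (u w)) z := hφ.comp z hu
  rw [← flatLaplacian_eq_laplacian hφu, ← flatLaplacian_eq_laplacian hu,
    flatLaplacian, flatLaplacian, fderiv_fderiv_apply_comp hφ hu,
    fderiv_fderiv_apply_comp hφ hu]
  ring

lemma InnerProductSpace.HarmonicAt.laplacian_sq {u : ℂ → ℝ} {z : ℂ} (hu : HarmonicAt u z) :
    Δ (fun w => u w ^ 2) z = 2 * (fderiv ℝ u z 1 ^ 2 + fderiv ℝ u z I ^ 2) := by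
  have hsq : ContDiffAt ℝ 2 (fun x : ℝ => x ^ 2) (u z) := by fun_prop
  have hderiv : deriv (fun x : ℝ => x ^ 2) = fun x => 2 * x := funext fun x => by simp
  rw [hsq.laplacian_comp hu.1, hu.2.self_of_nhds, hderiv]
  simp

section Holomorphic

variable {g : ℂ → ℂ} {z : ℂ}

lemma DifferentiableAt.fderiv_re_comp_apply (hg : DifferentiableAt ℂ g z) (e : ℂ) :
    fderiv ℝ (fun w => (g w).re) z e = (deriv g z * e).re := by
  have h : HasFDerivAt (fun w => (g w).re) _ z :=
    reCLM.hasFDerivAt.comp z hg.hasDerivAt.complexToReal_fderiv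
  rw [h.fderiv]
  simp [mul_comm]

lemma DifferentiableAt.fderiv_im_comp_apply (hg : DifferentiableAt ℂ g z) (e : ℂ) :
    fderiv ℝ (fun w => (g w).im) z e = (deriv g z * e).im := by
  have h : HasFDerivAt (fun w => (g w).im) _ z :=
    imCLM.hasFDerivAt.comp z hg.hasDerivAt.complexToReal_fderiv
  rw [h.fderiv]
  simp [mul_comm]

lemma DifferentiableAt.fderiv_norm_sq_comp_apply (hg : DifferentiableAt ℂ g z) (e : ℂ) :
    fderiv ℝ (fun w => ‖g w‖ ^ 2) z e = 2 * (deriv g z * e * conj (g z)).re := by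
  rw [hg.hasDerivAt.complexToReal_fderiv.norm_sq.fderiv]
  simp only [_root_.smul_apply, ContinuousLinearMap.comp_apply, one_apply_eq_self,
    coe_innerSL_apply, Complex.inner, smul_eq_mul, nsmul_eq_mul, Nat.cast_ofNat]

lemma AnalyticAt.laplacian_norm_sq (hg : AnalyticAt ℂ g z) :
    Δ (fun w => ‖g w‖ ^ 2) z = 4 * ‖deriv g z‖ ^ 2 := by
  have hsplit : (fun w => ‖g w‖ ^ 2) = (fun w => (g w).re ^ 2) + fun w => (g w).im ^ 2 := by
    funext w
    rw [Pi.add_apply, Complex.sq_norm, Complex.normSq_apply]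
    ring
  have hre := hg.harmonicAt_re
  have him := hg.harmonicAt_im
  rw [hsplit, (hre.1.pow 2).laplacian_add (him.1.pow 2), hre.laplacian_sq, him.laplacian_sq]
  simp only [hg.differentiableAt.fderiv_re_comp_apply, hg.differentiableAt.fderiv_im_comp_apply,
    mul_one, mul_re, mul_im, I_re, I_im, Complex.sq_norm, normSq_apply]
  ring

lemma AnalyticAt.laplacian_log_one_add_norm_sq (hg : AnalyticAt ℂ g z) :
    Δ (fun w => Real.log (1 + ‖g w‖ ^ 2)) z = 4 * ‖deriv g z‖ ^ 2 / (1 + ‖g z‖ ^ 2) ^ 2 := by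
  have hnormSq : ContDiffAt ℝ 2 (fun w => ‖g w‖ ^ 2) z :=
    (hg.contDiffAt.restrict_scalars ℝ).norm_sq ℝ
  have hpos : 0 < 1 + ‖g z‖ ^ 2 := by positivity
  have hlog : ContDiffAt ℝ 2 Real.log (1 + ‖g z‖ ^ 2) := Real.contDiffAt_log.2 hpos.ne'
  have hΔ : Δ (fun w : ℂ => (1 : ℝ) + ‖g w‖ ^ 2) z = 4 * ‖deriv g z‖ ^ 2 := by
    rw [← hg.laplacian_norm_sq]
    exact contDiffAt_const.laplacian_add hnormSq |>.trans (by simp)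
  have hgrad : fderiv ℝ (fun w => 1 + ‖g w‖ ^ 2) z 1 ^ 2 +
      fderiv ℝ (fun w => 1 + ‖g w‖ ^ 2) z I ^ 2 = 4 * ‖g z‖ ^ 2 * ‖deriv g z‖ ^ 2 := by
    rw [fderiv_const_add, hg.differentiableAt.fderiv_norm_sq_comp_apply,
      hg.differentiableAt.fderiv_norm_sq_comp_apply]
    simp only [mul_one, mul_re, mul_im, conj_re, conj_im, I_re, I_im, Complex.sq_norm,
      normSq_apply]
    ring
  rw [hlog.laplacian_comp (contDiffAt_const.add hnormSq), hgrad, hΔ, Real.deriv_log', deriv_inv']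
  field_simp
  ring

end Holomorphic

theorem weierstrass_gauss_curvature_eq_general
    (U : Set ℂ) (hU : IsOpen U)
    (f g : ℂ → ℂ)
    (hf : DifferentiableOn ℂ f U) (hg : DifferentiableOn ℂ g U)
    (hf0 : ∀ z ∈ U, f z ≠ 0)
    (lam K : ℂ → ℝ)
    (hlam : ∀ z, lam z = ‖f z‖ * (1 + ‖g z‖ ^ 2) / 2)
    (hK : ∀ z, K z = -(4 * ‖deriv g z‖ /
      (‖f z‖ * (1 + ‖g z‖ ^ 2) ^ 2)) ^ 2) :
    ∀ z ∈ U,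
      flatLaplacian (fun w => Real.log (lam w)) z = -(K z) * lam z ^ 2 := by
  intro z hz
  have hfz : AnalyticAt ℂ f z := hf.analyticAt (hU.mem_nhds hz)
  have hgz : AnalyticAt ℂ g z := hg.analyticAt (hU.mem_nhds hz)
  have hlogf := hfz.harmonicAt_log_norm (hf0 z hz)
  have hlogg : ContDiffAt ℝ 2 (fun w => Real.log (1 + ‖g w‖ ^ 2)) z :=
    Real.contDiffAt_log.2 (by positivity) |>.comp z
      (contDiffAt_const.add ((hgz.contDiffAt.restrict_scalars ℝ).norm_sq ℝ))
  have hsplit : (fun w => Real.log (lam w)) =ᶠ[𝓝 z]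
      (fun w => Real.log ‖f w‖) + (fun w => Real.log (1 + ‖g w‖ ^ 2)) - fun _ => Real.log 2 := by
    filter_upwards [hfz.continuousAt.eventually_ne (hf0 z hz)] with w hw
    rw [hlam, Real.log_div (by positivity) two_ne_zero,
      Real.log_mul (norm_ne_zero_iff.2 hw) (by positivity)]
    rfl
  have hsum : ContDiffAt ℝ 2
      ((fun w => Real.log ‖f w‖) + fun w => Real.log (1 + ‖g w‖ ^ 2)) z := hlogf.1.add hlogg
  rw [flatLaplacian_eq_laplacian ((hsum.sub contDiffAt_const).congr_of_eventuallyEq hsplit),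
    (laplacian_congr_nhds hsplit).self_of_nhds, hsum.laplacian_sub contDiffAt_const,
    hlogf.1.laplacian_add hlogg, hlogf.2.self_of_nhds, hgz.laplacian_log_one_add_norm_sq, hK z,
    hlam z]
  have hfz0 : ‖f z‖ ≠ 0 := norm_ne_zero_iff.2 (hf0 z hz)
  simp only [Pi.zero_apply, zero_add, laplacian_const, sub_zero, neg_neg]
  field_simp
  ring

/-- For Weierstrass data `(f, g)` on an open set `U ⊆ ℂ`, the Gauss
curvature of the induced metric `λ²(dx² + dy²)` is computed in the isothermal
coordinate by `Δ(ln λ)(z) = −K(z) λ(z)²` for every `z ∈ U`, where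
`λ = |f|(1 + |g|²)/2` and `K = −(4|g'| / (|f|(1 + |g|²)²))²`. -/
theorem weierstrass_gauss_curvature_eq
    (U : Set ℂ) (hU : IsOpen U)
    (f g : ℂ → ℂ)
    (hf : DifferentiableOn ℂ f U) (hg : DifferentiableOn ℂ g U)
    (hf0 : ∀ z ∈ U, f z ≠ 0) (hg' : ∀ z ∈ U, deriv g z ≠ 0)
    (lam K : ℂ → ℝ)
    (hlam : ∀ z, lam z = ‖f z‖ * (1 + ‖g z‖ ^ 2) / 2)
    (hK : ∀ z, K z = -(4 * ‖deriv g z‖ /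
      (‖f z‖ * (1 + ‖g z‖ ^ 2) ^ 2)) ^ 2) :
    ∀ z ∈ U,
      flatLaplacian (fun w => Real.log (lam w)) z = -(K z) * lam z ^ 2 :=
  weierstrass_gauss_curvature_eq_general U hU f g hf hg hf0 lam K hlam hK
end
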